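/- For every even integer N ≥ 2, S(N) = 3 · ∏_{p prime, p ∤ N, p < N} (1 + 1/p²) · ∏_{p prime, p ∣ N} (1 − 2/(p² + 1)) satisfies S(N) > 1. -/

import Mathlib

/-!
Since every factor `1 + 1/p²` is at least `1`, it suffices that
`∏_{p ∣ N} (1 − 2/(p² + 1)) ≥ 9/25 > 1/3`. The factor at `p = 2` is `3/5`. For an odd prime
`p = 2k + 1` the factor `(p² − 1)/(p² + 1)` dominates `g k / g (k + 1)` with
`g k = 1 − 2/(4k + 1)`, so the product over the odd primes is at least the telescoping product
`g 1 / g ∞ = 3/5`.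
-/

open Finset

/-- The singular series
`S(N) = 3 · ∏_{p prime, p ∤ N, p < N} (1 + 1/p²) · ∏_{p prime, p ∣ N} (1 − 2/(p² + 1))`. -/
noncomputable def singularSeries (N : ℕ) : ℝ :=
  3 * (∏ p ∈ (Finset.range N).filter (fun p => p.Prime ∧ ¬ p ∣ N), (1 + 1 / (p : ℝ) ^ 2))
    * (∏ p ∈ N.primeFactors, (1 - 2 / ((p : ℝ) ^ 2 + 1)))

section Telescoping

variable {g : ℕ → ℝ} {a : ℕ}

theorem prod_Ico_div_succ (hg : ∀ k, a ≤ k → g k ≠ 0) (n : ℕ) :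
    ∏ k ∈ Ico a (a + n), g k / g (k + 1) = g a / g (a + n) := by
  induction n with
  | zero => simp [div_self (hg a le_rfl)]
  | succ n ih =>
    rw [← add_assoc, prod_Ico_succ_top (Nat.le_add_right a n), ih,
      div_mul_div_cancel₀ (hg _ (Nat.le_add_right a n))]

theorem le_prod_div_succ_of_monotone (hg : Monotone g) (ha : 0 < g a) (hle : ∀ k, g k ≤ 1)
    {s : Finset ℕ} (hs : ∀ k ∈ s, a ≤ k) : g a ≤ ∏ k ∈ s, g k / g (k + 1) := by
  have hpos : ∀ k, a ≤ k → 0 < g k := fun k hk => ha.trans_le (hg hk)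
  obtain ⟨n, hn⟩ := s.exists_nat_subset_range
  have hsub : s ⊆ Ico a (a + n) := fun k hk => by
    have := mem_range.mp (hn hk)
    exact mem_Ico.mpr ⟨hs k hk, by omega⟩
  calc g a ≤ g a / g (a + n) := le_div_self ha.le (hpos _ (Nat.le_add_right a n)) (hle _)
    _ = ∏ k ∈ Ico a (a + n), g k / g (k + 1) :=
        (prod_Ico_div_succ (fun k hk => (hpos k hk).ne') n).symm
    _ ≤ ∏ k ∈ s, g k / g (k + 1) := by
        refine prod_le_prod_of_subset_of_le_one hsub (fun k hk => ?_) (fun k hk _ => ?_) <;>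
          have hk := (mem_Ico.mp hk).1
        · exact div_nonneg (hpos k hk).le (hpos (k + 1) (by omega)).le
        · exact div_le_one_of_le₀ (hg k.le_succ) (hpos (k + 1) (by omega)).le

end Telescoping

-- With `p = 2k + 1` this is `(4p² − 9)/(4p² − 1) ≤ (p² − 1)/(p² + 1)`, i.e. `−9 ≤ 1` after
-- clearing denominators.
theorem div_succ_le_one_sub_two_div_sq_add_one (k : ℕ) :
    (1 - 2 / (4 * k + 1 : ℝ)) / (1 - 2 / (4 * (k + 1 : ℕ) + 1)) ≤
      1 - 2 / (((2 * k + 1 : ℕ) : ℝ) ^ 2 + 1) := by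
  have hpos : (0 : ℝ) < 1 - 2 / (4 * (k + 1 : ℕ) + 1) := by
    rw [sub_pos, div_lt_one (by positivity)]
    push_cast
    linarith [(k.cast_nonneg : (0 : ℝ) ≤ k)]
  rw [div_le_iff₀ hpos]
  push_cast
  field_simp
  nlinarith

theorem three_fifths_le_prod_of_odd {F : Finset ℕ} (hF : ∀ p ∈ F, Odd p ∧ 3 ≤ p) :
    3 / 5 ≤ ∏ p ∈ F, (1 - 2 / ((p : ℝ) ^ 2 + 1)) := by
  set g : ℕ → ℝ := fun k => 1 - 2 / (4 * k + 1)
  have hg : Monotone g := fun i j hij => by simp only [g]; gcongr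
  have hg_pos : ∀ k, 1 ≤ k → 0 < g k := fun k hk => by
    have : (1 : ℝ) ≤ k := by exact_mod_cast hk
    simp only [g]
    rw [sub_pos, div_lt_one (by positivity)]
    linarith
  have hinj : Set.InjOn (· / 2) (F : Set ℕ) := fun p hp q hq hpq => by
    have := (hF p hp).1; have := (hF q hq).1; grind
  have hhalf : ∀ k ∈ F.image (· / 2), 1 ≤ k := fun k hk => by
    obtain ⟨p, hp, rfl⟩ := mem_image.mp hk
    have := (hF p hp).2
    omega
  calc (3 / 5 : ℝ) = g 1 := by norm_num [g]
    _ ≤ ∏ k ∈ F.image (· / 2), g k / g (k + 1) :=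
        le_prod_div_succ_of_monotone hg (hg_pos 1 le_rfl)
          (fun k => sub_le_self _ (by positivity)) hhalf
    _ ≤ ∏ k ∈ F.image (· / 2), (1 - 2 / (((2 * k + 1 : ℕ) : ℝ) ^ 2 + 1)) :=
        prod_le_prod
          (fun k hk => div_nonneg (hg_pos k (hhalf k hk)).le (hg_pos (k + 1) (by omega)).le)
          (fun k _ => div_succ_le_one_sub_two_div_sq_add_one k)
    _ = ∏ p ∈ F, (1 - 2 / ((p : ℝ) ^ 2 + 1)) := by
        rw [prod_image hinj]
        exact prod_congr rfl fun p hp => by rw [Nat.two_mul_div_two_add_one_of_odd (hF p hp).1]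

theorem nine_twentyFifths_le_prod_of_prime {P : Finset ℕ} (hP : ∀ p ∈ P, p.Prime) :
    9 / 25 ≤ ∏ p ∈ P, (1 - 2 / ((p : ℝ) ^ 2 + 1)) := by
  have hodd : 3 / 5 ≤ ∏ p ∈ P.erase 2, (1 - 2 / ((p : ℝ) ^ 2 + 1)) :=
    three_fifths_le_prod_of_odd fun p hp => by
      have hprime := hP p (mem_of_mem_erase hp)
      have hodd := hprime.odd_of_ne_two (ne_of_mem_erase hp)
      exact ⟨hodd, by have := hprime.two_le; grind⟩
  by_cases h2 : 2 ∈ P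
  · have h2_factor : 1 - 2 / (((2 : ℕ) : ℝ) ^ 2 + 1) = 3 / 5 := by norm_num
    rw [← mul_prod_erase P _ h2, h2_factor]
    linarith
  · rw [erase_eq_of_notMem h2] at hodd
    linarith

theorem singularSeries_gt_one_general (N : ℕ) :
    singularSeries N > 1 := by
  have hcoprime : 1 ≤ ∏ p ∈ (range N).filter (fun p => p.Prime ∧ ¬ p ∣ N),
      (1 + 1 / (p : ℝ) ^ 2) :=
    one_le_prod fun p _ => le_add_of_nonneg_right (by positivity)
  have hdivisors : 9 / 25 ≤ ∏ p ∈ N.primeFactors, (1 - 2 / ((p : ℝ) ^ 2 + 1)) :=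
    nine_twentyFifths_le_prod_of_prime fun p hp => Nat.prime_of_mem_primeFactors hp
  unfold singularSeries
  nlinarith

/-- For every even integer `N ≥ 2` the singular series satisfies `S(N) > 1`. -/
theorem singularSeries_gt_one (N : ℕ) (hN : 2 ≤ N) (heven : 2 ∣ N) :
    singularSeries N > 1 :=
  singularSeries_gt_one_general N
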